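/- (Subgradient comparison between model and objective.) Let g : ℝ^d → ℝ ∪ {+∞} be closed (lower semicontinuous), let γ > 0, and suppose that for every x ∈ ℝ^d there is a convex function g_x : ℝ^d → ℝ ∪ {+∞} with |g_x(y) − g(y)| ≤ (γ/2)‖y − x‖² for all y ∈ ℝ^d. Fix x̄ ∈ ℝ^d and λ > 0, and define G_x̄(y) := g_x̄(y) + (γ/2)‖y − x̄‖². Then for every point y₁ with G_x̄(y₁) finite and every Fréchet subgradient v₁ ∈ ∂G_x̄(y₁), there exists a point y₂ ∈ ℝ^d with ‖y₁ − y₂‖ ≤ 2λ, ∂g(y₂) ≠ ∅, and dist(v₁, ∂g(y₂)) ≤ γ‖y₁ − x̄‖²/λ + 2γ‖y₂ − x̄‖, where ∂g denotes the Fréchet subdifferential of g. -/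

import Mathlib

open Metric
open scoped RealInnerProductSpace

/-- Convexity of an extended-real-valued function. -/
def ERealConvexOn {d : ℕ} (h : EuclideanSpace ℝ (Fin d) → EReal) : Prop :=
  ∀ y z : EuclideanSpace ℝ (Fin d), ∀ a b : ℝ, 0 ≤ a → 0 ≤ b → a + b = 1 →
    h (a • y + b • z) ≤ (a : EReal) * h y + (b : EReal) * h z

/-- The Fréchet subdifferential of an extended-real-valued function `h` at a
point `x` where `h x` is finite. -/
def frechetSubdiff {d : ℕ} (h : EuclideanSpace ℝ (Fin d) → EReal)
    (x : EuclideanSpace ℝ (Fin d)) : Set (EuclideanSpace ℝ (Fin d)) :=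
  {v | h x ≠ ⊤ ∧ h x ≠ ⊥ ∧ ∀ ε > (0 : ℝ), ∃ δ > (0 : ℝ), ∀ y, ‖y - x‖ < δ →
    (((h x).toReal + ⟪v, y - x⟫ - ε * ‖y - x‖ : ℝ) : EReal) ≤ h y}

/-- The model `G_x̄(y) := g_x̄(y) + (γ/2)‖y − x̄‖²` built from a model `g_x̄`. -/
noncomputable def Gmodel {d : ℕ} (gx : EuclideanSpace ℝ (Fin d) → EReal) (γ : ℝ)
    (xb : EuclideanSpace ℝ (Fin d)) : EuclideanSpace ℝ (Fin d) → EReal :=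
  fun y => gx y + ((γ / 2 * ‖y - xb‖ ^ 2 : ℝ) : EReal)

/-!
Since `G_x̄` is convex, the Fréchet subgradient `v₁` is a global subgradient, and together with
`G_x̄ ≤ g + γ‖· - x̄‖²` this gives the minorant `g ≥ G_x̄(y₁) + ⟪v₁, · - y₁⟫ - γ‖· - x̄‖²`.
Hence `g - ⟪v₁, · - y₁⟫ + γ‖· - x̄‖² + (α/2)‖· - y₁‖²` is lower semicontinuous and coercive; a
global minimiser `y₂` satisfies `(α/2)‖y₂ - y₁‖² ≤ γ‖y₁ - x̄‖²`, and its optimality condition puts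
`v₁ - 2γ(y₂ - x̄) - α(y₂ - y₁)` in `∂g(y₂)`. The weight `α = γ‖y₁ - x̄‖² / (2λ²)` (any `α > 0`
when `y₁ = x̄`) turns these into the two bounds.
-/

theorem norm_sub_sq_eq_norm_sub_sq_add {F : Type*} [NormedAddCommGroup F] [InnerProductSpace ℝ F]
    (a b c : F) : ‖c - a‖ ^ 2 = ‖b - a‖ ^ 2 + 2 * ⟪b - a, c - b⟫ + ‖c - b‖ ^ 2 := by
  rw [← norm_add_sq_real, sub_add_sub_cancel']

theorem LowerSemicontinuous.exists_forall_le' {α β : Type*} [TopologicalSpace α] [LinearOrder β]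
    {f : α → β} (hf : LowerSemicontinuous f) (x₀ : α) (h : ∀ᶠ x in Filter.cocompact α, f x₀ ≤ f x) :
    ∃ x, ∀ y, f x ≤ f y := by
  obtain ⟨K, hK, hKf⟩ := Filter.hasBasis_cocompact.eventually_iff.1 h
  obtain ⟨x, -, hx⟩ := (hf.lowerSemicontinuousOn _).exists_isMinOn
    (Set.insert_nonempty _ _) (hK.insert x₀)
  refine ⟨x, fun y => ?_⟩
  by_cases hy : y ∈ K
  · exact hx (Set.mem_insert_of_mem _ hy)
  · exact (hx (Set.mem_insert _ _)).trans (hKf hy)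

theorem exists_pos_mul_le_of_sq_le {c lam : ℝ} (hc : 0 ≤ c) (hlam : 0 < lam) :
    ∃ α > 0, ∀ t, 0 ≤ t → α / 2 * t ^ 2 ≤ c → t ≤ 2 * lam ∧ α * t ≤ c / lam := by
  rcases hc.eq_or_lt with rfl | hc
  · refine ⟨1, one_pos, fun t ht h => ?_⟩
    have : t = 0 := by nlinarith
    subst this
    constructor <;> simp [hlam.le]
  · refine ⟨c / (2 * lam ^ 2), by positivity, fun t ht h => ?_⟩
    have ht2 : t ≤ 2 * lam := by
      rw [div_div, div_mul_eq_mul_div, div_le_iff₀ (by positivity)] at h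
      have hsq : t ^ 2 ≤ (2 * lam) ^ 2 := by nlinarith [le_of_mul_le_mul_left h hc]
      exact (pow_le_pow_iff_left₀ ht (by positivity) two_ne_zero).1 hsq
    refine ⟨ht2, ?_⟩
    calc c / (2 * lam ^ 2) * t ≤ c / (2 * lam ^ 2) * (2 * lam) := by gcongr
      _ = c / lam := by field_simp

section

variable {d : ℕ}

theorem ERealConvexOn.add_real {h : EuclideanSpace ℝ (Fin d) → EReal}
    {q : EuclideanSpace ℝ (Fin d) → ℝ} (hh : ERealConvexOn h) (hq : ConvexOn ℝ Set.univ q) :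
    ERealConvexOn fun y => h y + q y := by
  intro y z a b ha hb hab
  have hqc : q (a • y + b • z) ≤ a * q y + b * q z := by
    simpa using hq.2 (Set.mem_univ y) (Set.mem_univ z) ha hb hab
  calc h (a • y + b • z) + q (a • y + b • z)
      ≤ ((a : EReal) * h y + b * h z) + ((a * q y + b * q z : ℝ) : EReal) :=
        add_le_add (hh y z a b ha hb hab) (EReal.coe_le_coe_iff.mpr hqc)
    _ = a * (h y + q y) + b * (h z + q z) := by
        rw [EReal.left_distrib_of_nonneg_of_ne_top (EReal.coe_nonneg.2 ha) (EReal.coe_ne_top a),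
          EReal.left_distrib_of_nonneg_of_ne_top (EReal.coe_nonneg.2 hb) (EReal.coe_ne_top b),
          EReal.coe_add, EReal.coe_mul, EReal.coe_mul]
        exact add_add_add_comm _ _ _ _

theorem ERealConvexOn.gmodel {gx : EuclideanSpace ℝ (Fin d) → EReal} (hgx : ERealConvexOn gx)
    {γ : ℝ} (hγ : 0 ≤ γ) (xb : EuclideanSpace ℝ (Fin d)) : ERealConvexOn (Gmodel gx γ xb) := by
  have hq := ((convexOn_univ_dist xb).pow (fun _ _ => dist_nonneg) 2).smul
    (by positivity : 0 ≤ γ / 2)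
  convert hgx.add_real hq using 1
  funext y
  simp only [Gmodel, Pi.pow_apply, smul_eq_mul, dist_eq_norm]

theorem exists_segment_le_of_mem_frechetSubdiff {h : EuclideanSpace ℝ (Fin d) → EReal}
    {x v : EuclideanSpace ℝ (Fin d)} (hv : v ∈ frechetSubdiff h x) (y : EuclideanSpace ℝ (Fin d))
    {ε : ℝ} (hε : 0 < ε) :
    ∃ t : ℝ, 0 < t ∧ t ≤ 1 ∧
      (((h x).toReal + t * (⟪v, y - x⟫ - ε * ‖y - x‖) : ℝ) : EReal) ≤ h ((1 - t) • x + t • y) := by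
  obtain ⟨δ, hδ, hδx⟩ := hv.2.2 ε hε
  set n := ‖y - x‖
  set t := min 1 (δ / (n + 1))
  have ht : 0 < t := by positivity
  have hdisp : (1 - t) • x + t • y - x = t • (y - x) := by module
  have htn : t * n < δ :=
    calc t * n ≤ δ / (n + 1) * n := by gcongr; exact min_le_right _ _
      _ < δ := by rw [div_mul_eq_mul_div, div_lt_iff₀ (by positivity)]; nlinarith
  refine ⟨t, ht, min_le_left _ _, ?_⟩
  have := hδx ((1 - t) • x + t • y) (by rwa [hdisp, norm_smul, Real.norm_of_nonneg ht.le])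
  rw [hdisp, real_inner_smul_right, norm_smul, Real.norm_of_nonneg ht.le] at this
  convert this using 3
  ring

theorem ERealConvexOn.le_of_mem_frechetSubdiff {h : EuclideanSpace ℝ (Fin d) → EReal}
    (hh : ERealConvexOn h) {x v : EuclideanSpace ℝ (Fin d)} (hv : v ∈ frechetSubdiff h x)
    (y : EuclideanSpace ℝ (Fin d)) : (((h x).toReal + ⟪v, y - x⟫ : ℝ) : EReal) ≤ h y := by
  set a := (h x).toReal
  set c := ⟪v, y - x⟫
  set n := ‖y - x‖
  have hseg : ∀ ε > 0, ∃ t : ℝ, 0 < t ∧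
      (((a + t * (c - ε * n)) : ℝ) : EReal) ≤ ((1 - t : ℝ) : EReal) * a + t * h y := by
    intro ε hε
    obtain ⟨t, ht0, ht1, ht⟩ := exists_segment_le_of_mem_frechetSubdiff hv y hε
    have hconv := hh x y (1 - t) t (by linarith) ht0.le (by ring)
    rw [← EReal.coe_toReal hv.1 hv.2.1] at hconv
    exact ⟨t, ht0, ht.trans hconv⟩
  generalize h y = b at hseg ⊢
  induction b using EReal.rec with
  | bot =>
    obtain ⟨t, ht, hle⟩ := hseg 1 one_pos
    rw [EReal.coe_mul_bot_of_pos ht, EReal.add_bot, le_bot_iff] at hle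
    exact absurd hle (EReal.coe_ne_bot _)
  | coe r =>
    rw [EReal.coe_le_coe_iff]
    refine le_of_forall_pos_le_add fun ε hε => ?_
    obtain ⟨t, ht, hle⟩ := hseg (ε / (n + 1)) (by positivity)
    rw [← EReal.coe_mul, ← EReal.coe_mul, ← EReal.coe_add, EReal.coe_le_coe_iff] at hle
    have hεn : ε / (n + 1) * n ≤ ε := by
      rw [div_mul_eq_mul_div, div_le_iff₀ (by positivity)]; nlinarith
    nlinarith
  | top => exact le_top

theorem le_of_mem_frechetSubdiff_gmodel {g gx : EuclideanSpace ℝ (Fin d) → EReal} {γ : ℝ}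
    (hγ : 0 ≤ γ) {xb : EuclideanSpace ℝ (Fin d)} (hgx : ERealConvexOn gx)
    (happ : ∀ y, gx y ≤ g y + ((γ / 2 * ‖y - xb‖ ^ 2 : ℝ) : EReal))
    {y₁ v : EuclideanSpace ℝ (Fin d)} (hv : v ∈ frechetSubdiff (Gmodel gx γ xb) y₁)
    (y : EuclideanSpace ℝ (Fin d)) :
    (((Gmodel gx γ xb y₁).toReal + ⟪v, y - y₁⟫ - γ * ‖y - xb‖ ^ 2 : ℝ) : EReal) ≤ g y := by
  have hG : Gmodel gx γ xb y ≤ g y + ((γ * ‖y - xb‖ ^ 2 : ℝ) : EReal) :=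
    calc Gmodel gx γ xb y = gx y + ((γ / 2 * ‖y - xb‖ ^ 2 : ℝ) : EReal) := rfl
      _ ≤ g y + ((γ / 2 * ‖y - xb‖ ^ 2 : ℝ) : EReal) + ((γ / 2 * ‖y - xb‖ ^ 2 : ℝ) : EReal) := by
        gcongr; exact happ y
      _ = g y + ((γ * ‖y - xb‖ ^ 2 : ℝ) : EReal) := by
        rw [add_assoc, ← EReal.coe_add]; ring_nf
  rw [EReal.coe_sub,
    EReal.sub_le_iff_le_add (.inl (EReal.coe_ne_bot _)) (.inl (EReal.coe_ne_top _))]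
  exact ((hgx.gmodel hγ xb).le_of_mem_frechetSubdiff hv y).trans hG

theorem neg_mem_frechetSubdiff_of_isMinOn_add {g : EuclideanSpace ℝ (Fin d) → EReal}
    {φ : EuclideanSpace ℝ (Fin d) → ℝ} {x u : EuclideanSpace ℝ (Fin d)} {L : ℝ}
    (hgt : g x ≠ ⊤) (hgb : g x ≠ ⊥) (hmin : IsMinOn (fun y => g y + φ y) Set.univ x)
    (hφ : ∀ y, φ y ≤ φ x + ⟪u, y - x⟫ + L * ‖y - x‖ ^ 2) : -u ∈ frechetSubdiff g x := by
  refine ⟨hgt, hgb, fun ε hε => ⟨ε / (|L| + 1), by positivity, fun y hy => ?_⟩⟩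
  have hquad : L * ‖y - x‖ ^ 2 ≤ ε * ‖y - x‖ := by
    rw [lt_div_iff₀ (by positivity)] at hy
    nlinarith [le_abs_self L, norm_nonneg (y - x), abs_nonneg L]
  have hy : g x + φ x ≤ g y + φ y := hmin (Set.mem_univ y)
  rw [← EReal.coe_toReal hgt hgb, ← EReal.coe_add,
    ← EReal.sub_le_iff_le_add (.inl (EReal.coe_ne_bot _)) (.inl (EReal.coe_ne_top _)),
    ← EReal.coe_sub] at hy
  refine le_trans (EReal.coe_le_coe_iff.2 ?_) hy
  rw [inner_neg_left]
  linarith [hφ y]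

theorem exists_mem_frechetSubdiff_near {g : EuclideanSpace ℝ (Fin d) → EReal}
    (hg : LowerSemicontinuous g) {v y₁ xb : EuclideanSpace ℝ (Fin d)} {p γ α : ℝ} (hα : 0 < α)
    (hminor : ∀ y, ((p + ⟪v, y - y₁⟫ - γ * ‖y - xb‖ ^ 2 : ℝ) : EReal) ≤ g y) (hy₁ : g y₁ ≤ p) :
    ∃ y₂, α / 2 * ‖y₂ - y₁‖ ^ 2 ≤ γ * ‖y₁ - xb‖ ^ 2 ∧
      v - (2 * γ) • (y₂ - xb) - α • (y₂ - y₁) ∈ frechetSubdiff g y₂ := by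
  set c := γ * ‖y₁ - xb‖ ^ 2
  set φ : EuclideanSpace ℝ (Fin d) → ℝ :=
    fun y => -⟪v, y - y₁⟫ + γ * ‖y - xb‖ ^ 2 + α / 2 * ‖y - y₁‖ ^ 2 with hφ
  have hψ : LowerSemicontinuous fun y => g y + φ y :=
    hg.add' (continuous_coe_real_ereal.comp (by fun_prop)).lowerSemicontinuous
      fun _ => EReal.continuousAt_add (.inr (EReal.coe_ne_bot _)) (.inr (EReal.coe_ne_top _))
  have hlower (y) : ((p + α / 2 * ‖y - y₁‖ ^ 2 : ℝ) : EReal) ≤ g y + φ y :=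
    calc ((p + α / 2 * ‖y - y₁‖ ^ 2 : ℝ) : EReal)
        = ((p + ⟪v, y - y₁⟫ - γ * ‖y - xb‖ ^ 2 : ℝ) : EReal) + φ y := by
          rw [← EReal.coe_add, hφ]; ring_nf
      _ ≤ g y + φ y := by gcongr; exact hminor y
  have hupper : g y₁ + φ y₁ ≤ ((p + c : ℝ) : EReal) := by
    rw [show φ y₁ = c by simp [hφ, c], EReal.coe_add]
    gcongr
  obtain ⟨y₂, hy₂⟩ := hψ.exists_forall_le' y₁ <| by
    filter_upwards [(isCompact_closedBall y₁ (Real.sqrt (2 * c / α))).compl_mem_cocompact]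
      with y hy
    refine hupper.trans ((EReal.coe_le_coe_iff.2 ?_).trans (hlower y))
    rw [Set.mem_compl_iff, mem_closedBall, dist_eq_norm, not_le] at hy
    rw [Real.sqrt_lt' ((Real.sqrt_nonneg _).trans_lt hy), div_lt_iff₀ hα] at hy
    linarith
  have hclose : α / 2 * ‖y₂ - y₁‖ ^ 2 ≤ c := by
    have := (hlower y₂).trans ((hy₂ y₁).trans hupper)
    rw [EReal.coe_le_coe_iff] at this
    linarith
  refine ⟨y₂, hclose, ?_⟩
  have hgt : g y₂ ≠ ⊤ := fun h => by
    have := (hy₂ y₁).trans hupper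
    rw [h, EReal.top_add_of_ne_bot (EReal.coe_ne_bot _), top_le_iff] at this
    exact EReal.coe_ne_top _ this
  have hgb : g y₂ ≠ ⊥ := ne_bot_of_le_ne_bot (EReal.coe_ne_bot _) (hminor y₂)
  have hexp (y) : φ y ≤ φ y₂ + ⟪-v + (2 * γ) • (y₂ - xb) + α • (y₂ - y₁), y - y₂⟫
      + (γ + α / 2) * ‖y - y₂‖ ^ 2 := by
    have hinner : ⟪v, y - y₁⟫ = ⟪v, y₂ - y₁⟫ + ⟪v, y - y₂⟫ := by
      rw [← inner_add_right, sub_add_sub_cancel']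
    simp only [hφ, norm_sub_sq_eq_norm_sub_sq_add xb y₂ y, norm_sub_sq_eq_norm_sub_sq_add y₁ y₂ y,
      hinner, inner_add_left, inner_neg_left, real_inner_smul_left]
    linarith
  convert neg_mem_frechetSubdiff_of_isMinOn_add hgt hgb (fun y _ => hy₂ y) hexp using 1
  module

end

theorem subgradient_comparison_general
    {d : ℕ} (g : EuclideanSpace ℝ (Fin d) → EReal)
    (gfam : EuclideanSpace ℝ (Fin d) → EuclideanSpace ℝ (Fin d) → EReal)
    (hglsc : LowerSemicontinuous g)
    (γ lam : ℝ) (hγ : 0 < γ) (hlam : 0 < lam)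
    (hconv : ∀ x, ERealConvexOn (gfam x))
    (happ₁ : ∀ x y, gfam x y ≤ g y + ((γ / 2 * ‖y - x‖ ^ 2 : ℝ) : EReal))
    (happ₂ : ∀ x y, g y ≤ gfam x y + ((γ / 2 * ‖y - x‖ ^ 2 : ℝ) : EReal))
    (xb : EuclideanSpace ℝ (Fin d)) :
    ∀ y₁, Gmodel (gfam xb) γ xb y₁ ≠ ⊤ →
      ∀ v₁ ∈ frechetSubdiff (Gmodel (gfam xb) γ xb) y₁,
        ∃ y₂ : EuclideanSpace ℝ (Fin d), ‖y₁ - y₂‖ ≤ 2 * lam ∧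
          (frechetSubdiff g y₂).Nonempty ∧
          infDist v₁ (frechetSubdiff g y₂)
            ≤ γ * ‖y₁ - xb‖ ^ 2 / lam + 2 * γ * ‖y₂ - xb‖ := by
  intro y₁ _ v₁ hv₁
  have hy₁ : g y₁ ≤ (Gmodel (gfam xb) γ xb y₁).toReal := by
    rw [EReal.coe_toReal hv₁.1 hv₁.2.1]
    exact happ₂ xb y₁
  obtain ⟨α, hα, hweight⟩ := exists_pos_mul_le_of_sq_le (by positivity : 0 ≤ γ * ‖y₁ - xb‖ ^ 2) hlam
  obtain ⟨y₂, hclose, hw⟩ := exists_mem_frechetSubdiff_near hglsc hα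
    (le_of_mem_frechetSubdiff_gmodel hγ.le (hconv xb) (happ₁ xb) hv₁) hy₁
  obtain ⟨hnear, hpenalty⟩ := hweight ‖y₂ - y₁‖ (norm_nonneg _) hclose
  refine ⟨y₂, (norm_sub_rev y₁ y₂).trans_le hnear, ⟨_, hw⟩, (infDist_le_dist_of_mem hw).trans ?_⟩
  calc dist v₁ (v₁ - (2 * γ) • (y₂ - xb) - α • (y₂ - y₁))
      = ‖(2 * γ) • (y₂ - xb) + α • (y₂ - y₁)‖ := by
        rw [dist_eq_norm]; congr 1; abel
    _ ≤ 2 * γ * ‖y₂ - xb‖ + α * ‖y₂ - y₁‖ := by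
        refine (norm_add_le _ _).trans_eq ?_
        rw [norm_smul, norm_smul, Real.norm_of_nonneg (by positivity), Real.norm_of_nonneg hα.le]
    _ ≤ γ * ‖y₁ - xb‖ ^ 2 / lam + 2 * γ * ‖y₂ - xb‖ := by linarith

/-- **Subgradient comparison between model and objective.** -/
theorem subgradient_comparison
    {d : ℕ} (g : EuclideanSpace ℝ (Fin d) → EReal)
    (gfam : EuclideanSpace ℝ (Fin d) → EuclideanSpace ℝ (Fin d) → EReal)
    (hglsc : LowerSemicontinuous g) (hgbot : ∀ y, g y ≠ ⊥)
    (γ lam : ℝ) (hγ : 0 < γ) (hlam : 0 < lam)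
    (hfambot : ∀ x y, gfam x y ≠ ⊥)
    (hconv : ∀ x, ERealConvexOn (gfam x))
    (happ₁ : ∀ x y, gfam x y ≤ g y + ((γ / 2 * ‖y - x‖ ^ 2 : ℝ) : EReal))
    (happ₂ : ∀ x y, g y ≤ gfam x y + ((γ / 2 * ‖y - x‖ ^ 2 : ℝ) : EReal))
    (xb : EuclideanSpace ℝ (Fin d)) :
    ∀ y₁, Gmodel (gfam xb) γ xb y₁ ≠ ⊤ →
      ∀ v₁ ∈ frechetSubdiff (Gmodel (gfam xb) γ xb) y₁,
        ∃ y₂ : EuclideanSpace ℝ (Fin d), ‖y₁ - y₂‖ ≤ 2 * lam ∧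
          (frechetSubdiff g y₂).Nonempty ∧
          infDist v₁ (frechetSubdiff g y₂)
            ≤ γ * ‖y₁ - xb‖ ^ 2 / lam + 2 * γ * ‖y₂ - xb‖ :=
  subgradient_comparison_general g gfam hglsc γ lam hγ hlam hconv happ₁ happ₂ xb
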